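/- The product ⋄ extended to k⟨A⟩ and the reduced deconcatenation coproduct Δ̃ satisfy the infinitesimal bialgebra compatibility: for all words w,v, Δ̃(w⋄v) = Σ_v (w⋄v_{(1)})⊗v_{(2)} + Σ_w w_{(1)}⊗(w_{(2)}⋄v), where Δ̃(w)=Σ_w w_{(1)}⊗w_{(2)} and Δ̃(v)=Σ_v v_{(1)}⊗v_{(2)} in Sweedler notation. -/

import Mathlib

/-!
Setting (Hoffman–Ihara, "Quasi-shuffle products revisited"):
`k` is a field containing `ℚ`, `A` a countable set of letters, `kA` the `k`-vector space
with basis `A` equipped with an associative commutative bilinear product `⋄` (given below as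
a bilinear map `d`), and `k⟨A⟩` the noncommutative polynomial algebra on `A`, realized as
the monoid algebra of the free monoid of words on `A`.
-/

noncomputable section

open scoped BigOperators TensorProduct

section QuasiShuffle

variable (k A : Type*) [Field k] [CharZero k] [Countable A]

/-- `k⟨A⟩`, the noncommutative polynomial algebra on `A`: the `k`-vector space with basis
the words in `A`, with concatenation product and unit the empty word. -/
abbrev KAlg : Type _ := MonoidAlgebra k (FreeMonoid A)

/-- `kA`, the `k`-vector space with basis `A`. -/
abbrev KA : Type _ := A →₀ k

variable {k A}

/-- The basis element of `k⟨A⟩` corresponding to a word. -/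
def word (w : List A) : KAlg k A := MonoidAlgebra.of k (FreeMonoid A) (FreeMonoid.ofList w)

/-- Linear extension to `k⟨A⟩` of a function defined on words. -/
def liftW {N : Type*} [AddCommMonoid N] [Module k N] (g : List A → N) :
    KAlg k A →ₗ[k] N :=
  (Finsupp.lsum k fun w => LinearMap.toSpanSingleton k N (g (FreeMonoid.toList w))) ∘ₗ
    (MonoidAlgebra.coeffLinearEquiv k).toLinearMap

/-- The inclusion of `kA` into `k⟨A⟩` (letters as one-letter words). -/
def incl : KA k A →ₗ[k] KAlg k A :=
  Finsupp.lsum k fun a => LinearMap.toSpanSingleton k (KAlg k A) (word [a])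

/-- The extension of `⋄` to a product on `k⟨A⟩`, on basis words:
`1⋄v = v`, `u⋄1 = u`, and `(u'a)⋄(bv') = u'(a⋄b)v'`. -/
def dmWord (d : KA k A →ₗ[k] KA k A →ₗ[k] KA k A) (u v : List A) : KAlg k A :=
  match u.getLast?, v.head? with
  | none, _ => word v
  | some _, none => word u
  | some a, some b =>
      word u.dropLast * incl (d (Finsupp.single a 1) (Finsupp.single b 1)) * word v.tail

/-- The extension of `⋄` to a bilinear (associative, noncommutative) product on `k⟨A⟩`. -/
def dm (d : KA k A →ₗ[k] KA k A →ₗ[k] KA k A) :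
    KAlg k A →ₗ[k] KAlg k A →ₗ[k] KAlg k A :=
  (Finsupp.lsum k fun u => LinearMap.toSpanSingleton k (KAlg k A →ₗ[k] KAlg k A)
    (liftW fun v => dmWord d (FreeMonoid.toList u) v)) ∘ₗ
    (MonoidAlgebra.coeffLinearEquiv k).toLinearMap

/-- The deconcatenation coproduct `Δ(w) = Σ_{uv=w} u ⊗ v`. -/
def Delta : KAlg k A →ₗ[k] TensorProduct k (KAlg k A) (KAlg k A) :=
  liftW fun w => ∑ i ∈ Finset.range (w.length + 1), word (w.take i) ⊗ₜ[k] word (w.drop i)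

/-- The reduced deconcatenation coproduct `Δ̃(w) = Σ_{uv=w, u≠1≠v} u ⊗ v`. -/
def rDelta : KAlg k A →ₗ[k] TensorProduct k (KAlg k A) (KAlg k A) :=
  liftW fun w => ∑ i ∈ Finset.Ico 1 w.length, word (w.take i) ⊗ₜ[k] word (w.drop i)

/-- The counit `ε` (coefficient of the empty word). -/
def epsL : KAlg k A →ₗ[k] k :=
  liftW fun w => if w.isEmpty then (1 : k) else 0

/-- `ηε`, the unit of the convolution product `⊙`. -/
def etaEps : KAlg k A →ₗ[k] KAlg k A :=
  liftW fun w => if w.isEmpty then word ([] : List A) else 0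

/-- The convolution product `⊙` on `Hom_k(k⟨A⟩, k⟨A⟩)`:
`(L₁ ⊙ L₂)(w) = Σ_{uv=w} L₁(u) L₂(v)` (concatenation product on the right). -/
def conv (L₁ L₂ : KAlg k A →ₗ[k] KAlg k A) : KAlg k A →ₗ[k] KAlg k A :=
  liftW fun w => ∑ i ∈ Finset.range (w.length + 1), L₁ (word (w.take i)) * L₂ (word (w.drop i))
section Aux
set_option linter.unusedVariables false

set_option linter.unusedSectionVars false
variable {k A : Type*} [Field k] [CharZero k] [Countable A]

lemma liftW_word {N : Type*} [AddCommMonoid N] [Module k N] (g : List A → N) (w : List A) :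
    liftW g (word w : KAlg k A) = g w := by
  simp only [liftW, word, MonoidAlgebra.of_apply, LinearMap.coe_comp, Function.comp_apply,
    LinearEquiv.coe_coe, MonoidAlgebra.coeffLinearEquiv_apply, MonoidAlgebra.coeff_single]
  erw [Finsupp.lsum_single]
  simp only [LinearMap.toSpanSingleton_apply, one_smul, FreeMonoid.toList_ofList]

lemma word_mul (u v : List A) : (word u : KAlg k A) * word v = word (u ++ v) := by
  simp only [word]
  rw [← map_mul]
  rfl

lemma dm_word (d : KA k A →ₗ[k] KA k A →ₗ[k] KA k A) (u v : List A) :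
    dm d (word u) (word v) = dmWord d u v := by
  have : dm d (word u) = liftW (fun v => dmWord d u v) := by
    simp only [dm, word, MonoidAlgebra.of_apply, LinearMap.coe_comp, Function.comp_apply,
      LinearEquiv.coe_coe, MonoidAlgebra.coeffLinearEquiv_apply, MonoidAlgebra.coeff_single]
    erw [Finsupp.lsum_single]
    simp only [LinearMap.toSpanSingleton_apply, one_smul, FreeMonoid.toList_ofList]
  rw [this, liftW_word]

lemma dmWord_nil_left (d : KA k A →ₗ[k] KA k A →ₗ[k] KA k A) (v : List A) :
    dmWord d [] v = word v := rfl

lemma dmWord_nil_right (d : KA k A →ₗ[k] KA k A →ₗ[k] KA k A) (u : List A) :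
    dmWord d u [] = word u := by
  cases hu : u.getLast? with
  | none => simp_all [dmWord, List.getLast?_eq_none_iff]
  | some a => simp [dmWord, hu]

lemma dmWord_concat_cons (d : KA k A →ₗ[k] KA k A →ₗ[k] KA k A) (u v : List A) (a b : A) :
    dmWord d (u ++ [a]) (b :: v) =
      word u * incl (d (Finsupp.single a 1) (Finsupp.single b 1)) * word v := by
  simp [dmWord, List.getLast?_concat]

example : True := trivial

lemma rDelta_word (w : List A) :
    rDelta (word w : KAlg k A) =
      ∑ i ∈ Finset.Ico 1 w.length, (word (w.take i) : KAlg k A) ⊗ₜ[k] word (w.drop i) := by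
  rw [rDelta, liftW_word]

lemma key_single (c : A) (w' v' : List A) :
    rDelta ((word w' : KAlg k A) * word [c] * word v') =
      (∑ j ∈ Finset.range v'.length,
        ((word w' : KAlg k A) * word [c] * word (v'.take j)) ⊗ₜ[k] word (v'.drop j)) +
      ∑ i ∈ Finset.Ico 1 (w'.length + 1),
        (word (w'.take i) : KAlg k A) ⊗ₜ[k] (word (w'.drop i) * word [c] * word v') := by
  rw [word_mul, word_mul, rDelta_word]
  have hlen : ((w' ++ [c]) ++ v').length = w'.length + 1 + v'.length := by simp; omega
  rw [hlen,
    ← Finset.sum_Ico_consecutive _ (by omega : 1 ≤ w'.length + 1)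
      (by omega : w'.length + 1 ≤ w'.length + 1 + v'.length), add_comm]
  congr 1
  · rw [Finset.sum_Ico_eq_sum_range]
    have h2 : w'.length + 1 + v'.length - (w'.length + 1) = v'.length := by omega
    rw [h2]
    apply Finset.sum_congr rfl
    intro j _
    have hl : (w' ++ [c]).length = w'.length + 1 := by simp
    have ht : ((w' ++ [c]) ++ v').take (w'.length + 1 + j) = (w' ++ [c]) ++ v'.take j := by
      rw [← hl, List.take_append, List.take_of_length_le (by omega), Nat.add_sub_cancel_left]
    have hd : ((w' ++ [c]) ++ v').drop (w'.length + 1 + j) = v'.drop j := by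
      rw [← hl, List.drop_append]
      simp
    rw [ht, hd, ← word_mul, ← word_mul]
  · apply Finset.sum_congr rfl
    intro i hi
    simp only [Finset.mem_Ico] at hi
    have hi' : i ≤ w'.length := by omega
    have ht : ((w' ++ [c]) ++ v').take i = w'.take i := by
      rw [List.take_append_of_le_length (by simp; omega),
        List.take_append_of_le_length hi']
    have hd : ((w' ++ [c]) ++ v').drop i = ((w'.drop i ++ [c]) ++ v') := by
      rw [List.drop_append_of_le_length (by simp; omega),
        List.drop_append_of_le_length hi']
    rw [ht, hd, ← word_mul, ← word_mul]

lemma incl_single (a : A) (r : k) :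
    (incl (Finsupp.single a r) : KAlg k A) = r • word [a] := by
  simp only [incl]
  erw [Finsupp.lsum_single]
  rw [LinearMap.toSpanSingleton_apply]

lemma key (w' v' : List A) (x : KA k A) :
    rDelta ((word w' : KAlg k A) * incl x * word v') =
      (∑ j ∈ Finset.range v'.length,
        ((word w' : KAlg k A) * incl x * word (v'.take j)) ⊗ₜ[k] word (v'.drop j)) +
      ∑ i ∈ Finset.Ico 1 (w'.length + 1),
        (word (w'.take i) : KAlg k A) ⊗ₜ[k] (word (w'.drop i) * incl x * word v') := by
  induction x using Finsupp.induction_linear with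
  | zero => simp
  | add f g hf hg =>
      simp only [map_add, add_mul, mul_add, TensorProduct.add_tmul,
        TensorProduct.tmul_add, Finset.sum_add_distrib, hf, hg]
      abel
  | single a r =>
      simp only [incl_single, smul_mul_assoc, mul_smul_comm, map_smul,
        TensorProduct.smul_tmul', TensorProduct.tmul_smul, ← Finset.smul_sum,
        key_single, smul_add]
      simp [← TensorProduct.smul_tmul', Finset.smul_sum]

theorem infinitesimal_compatibility'
    (d : KA k A →ₗ[k] KA k A →ₗ[k] KA k A) :
    ∀ (w v : List A),
      rDelta (dm d (word w) (word v)) =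
        TensorProduct.map (dm d (word w)) LinearMap.id (rDelta (word v)) +
          TensorProduct.map LinearMap.id ((dm d).flip (word v)) (rDelta (word w)) := by
  intro w v
  have h0 : rDelta (word ([] : List A) : KAlg k A) = 0 := by rw [rDelta_word]; simp
  rcases w.eq_nil_or_concat with rfl | ⟨w', a, rfl⟩
  · rw [dm_word, dmWord_nil_left, h0, map_zero, add_zero, rDelta_word, map_sum]
    refine Finset.sum_congr rfl fun i _ => ?_
    rw [TensorProduct.map_tmul, dm_word, dmWord_nil_left, LinearMap.id_apply]
  · simp only [List.concat_eq_append]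
    cases v with
    | nil =>
      rw [dm_word, dmWord_nil_right, h0, map_zero, zero_add, rDelta_word, map_sum]
      refine Finset.sum_congr rfl fun i _ => ?_
      rw [TensorProduct.map_tmul, LinearMap.id_apply, LinearMap.flip_apply, dm_word,
        dmWord_nil_right]
    | cons b v' =>
      rw [dm_word, dmWord_concat_cons, key]
      congr 1
      · rw [rDelta_word, map_sum]
        have hlen : (b :: v').length = v'.length + 1 := rfl
        rw [hlen, Finset.sum_Ico_eq_sum_range]
        have h2 : v'.length + 1 - 1 = v'.length := by omega
        rw [h2]
        refine Finset.sum_congr rfl fun j _ => ?_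
        rw [TensorProduct.map_tmul, LinearMap.id_apply, dm_word]
        have ht : (b :: v').take (1 + j) = b :: v'.take j := by rw [add_comm]; rfl
        have hd : (b :: v').drop (1 + j) = v'.drop j := by rw [add_comm]; rfl
        rw [ht, hd, dmWord_concat_cons]
      · rw [rDelta_word, map_sum]
        have hlen : (w' ++ [a]).length = w'.length + 1 := by simp
        rw [hlen]
        refine Finset.sum_congr rfl fun i hi => ?_
        simp only [Finset.mem_Ico] at hi
        rw [TensorProduct.map_tmul, LinearMap.id_apply, LinearMap.flip_apply, dm_word]
        have ht : (w' ++ [a]).take i = w'.take i := List.take_append_of_le_length (by omega)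
        have hd : (w' ++ [a]).drop i = w'.drop i ++ [a] :=
          List.drop_append_of_le_length (by omega)
        rw [ht, hd, dmWord_concat_cons]

end Aux

/-- part of Theorem 4.6 of Hoffman–Ihara: `(k⟨A⟩, ⋄, Δ̃)` satisfies the
infinitesimal bialgebra compatibility: for all words `w, v`,
`Δ̃(w⋄v) = Σ_v (w⋄v₍₁₎)⊗v₍₂₎ + Σ_w w₍₁₎⊗(w₍₂₎⋄v)`. -/
theorem infinitesimal_compatibility
    {k A : Type*} [Field k] [CharZero k] [Countable A]
    (d : KA k A →ₗ[k] KA k A →ₗ[k] KA k A)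
    (hd_comm : ∀ x y, d x y = d y x)
    (hd_assoc : ∀ x y z, d (d x y) z = d x (d y z)) :
    ∀ (w v : List A),
      rDelta (dm d (word w) (word v)) =
        TensorProduct.map (dm d (word w)) LinearMap.id (rDelta (word v)) +
          TensorProduct.map LinearMap.id ((dm d).flip (word v)) (rDelta (word w)) := by
  exact infinitesimal_compatibility' d

end QuasiShuffle
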